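/- For positive integers n ≤ m₃ ≤ m₀ with m₀ - m₃ ≥ n and m₀, m₃ = Θ(n log n), m₃/m₀ → 2/3, and any K = O(√n), one has ∑_{i=0}^{K} C(n,i)·C(m₀-n, m₃-(n-i)) / C(m₀, m₃) = (2/3 + o(1))^n as n → ∞. In particular, this probability is at most (n log n)^K · ∏_{j=0}^{n-1} (m₃-j)/(m₀-j) and at least ∏_{j=0}^{n-1} (m₃-j)/(m₀-j), and both bounds are (2/3+o(1))^n. -/

import Mathlib

/-!
Write `P = ∏_{j<n} (m₃-j)/(m₀-j)`; by `C(m₀,m₃)·C(m₃,n) = C(m₀,n)·C(m₀-n,m₃-n)` this is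
`C(m₀-n, m₃-n)/C(m₀,m₃)`, the `i = 0` term of the sum. Eventually `m₀ + n ≤ 2 m₃`, so
`C(m₀-n, ·)` decreases beyond `m₃ - n` and each of the `K+1` terms is at most
`n^K · C(m₀-n, m₃-n)`; moreover `(K+1) n^K ≤ (n log n)^K`. Every factor of `P` lies between
`(m₃-n)/m₀` and `m₃/(m₀-n)`, which both tend to `2/3` since `n = o(m₀)`, and
`((n log n)^K)^(1/n) → 1` since `K = O(√n)`. Hence `S^(1/n) → 2/3`.
-/

open Filter Finset Topology

theorem Nat.cast_choose_sub_div_cast_choose {𝕜 : Type*} [Field 𝕜] [CharZero 𝕜] {n k m : ℕ}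
    (hnk : n ≤ k) (hkm : k ≤ m) :
    ((m - n).choose (k - n) : 𝕜) / m.choose k = ∏ j ∈ range n, ((k : 𝕜) - j) / ((m : 𝕜) - j) := by
  have hdesc : ∀ {a : ℕ}, n ≤ a → (a.descFactorial n : 𝕜) = ∏ j ∈ range n, ((a : 𝕜) - j) :=
    fun ha => by
      rw [Nat.descFactorial_eq_prod_range, Nat.cast_prod]
      exact prod_congr rfl fun j hj => Nat.cast_sub (by grind)
  have hmul : (m.choose k : 𝕜) * k.choose n = m.choose n * (m - n).choose (k - n) := by
    exact_mod_cast Nat.choose_mul hnk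
  have hmk : (m.choose k : 𝕜) ≠ 0 := by exact_mod_cast (Nat.choose_pos hkm).ne'
  have hmn : (m.choose n : 𝕜) ≠ 0 := by exact_mod_cast (Nat.choose_pos (hnk.trans hkm)).ne'
  have hfact : (n.factorial : 𝕜) ≠ 0 := by exact_mod_cast n.factorial_ne_zero
  rw [prod_div_distrib, ← hdesc hnk, ← hdesc (hnk.trans hkm),
    Nat.descFactorial_eq_factorial_mul_choose, Nat.descFactorial_eq_factorial_mul_choose]
  push_cast
  rw [mul_div_mul_left _ _ hfact, div_eq_div_iff hmk hmn]
  linear_combination hmul.symm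

theorem Nat.choose_add_le_choose_of_le_two_mul {N a : ℕ} (h : N ≤ 2 * a) (i : ℕ) :
    N.choose (a + i) ≤ N.choose a := by
  induction i with
  | zero => rfl
  | succ i ih =>
    refine le_trans (Nat.le_of_mul_le_mul_right ?_ (a + i).succ_pos) ih
    rw [← add_assoc, Nat.choose_succ_right_eq]
    exact Nat.mul_le_mul_left _ (by omega)

theorem sum_choose_mul_choose_le {n k m : ℕ} (K : ℕ) (hn : 1 ≤ n) (hnk : n ≤ k)
    (hmid : m + n ≤ 2 * k) :
    ∑ i ∈ range (K + 1), n.choose i * (m - n).choose (k - (n - i)) ≤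
      (K + 1) * n ^ K * (m - n).choose (k - n) := by
  calc ∑ i ∈ range (K + 1), n.choose i * (m - n).choose (k - (n - i))
      ≤ ∑ _i ∈ range (K + 1), n ^ K * (m - n).choose (k - n) := by
        refine sum_le_sum fun i hi => ?_
        rcases le_or_gt i n with hin | hin
        · rw [show k - (n - i) = k - n + i by omega]
          exact Nat.mul_le_mul
            ((n.choose_le_pow i).trans (Nat.pow_le_pow_right hn (by grind)))
            (Nat.choose_add_le_choose_of_le_two_mul (by omega) i)
        · simp [Nat.choose_eq_zero_of_lt hin]
    _ = (K + 1) * n ^ K * (m - n).choose (k - n) := by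
        rw [sum_const, card_range, smul_eq_mul, mul_assoc]

theorem add_one_mul_pow_le_mul_pow {x y : ℝ} (hx : 0 ≤ x) (hy : 2 ≤ y) (K : ℕ) :
    (K + 1) * x ^ K ≤ (x * y) ^ K := by
  have hK : (K + 1 : ℝ) ≤ 2 ^ K := by exact_mod_cast K.lt_two_pow_self
  calc (K + 1) * x ^ K ≤ 2 ^ K * x ^ K := by gcongr
    _ ≤ y ^ K * x ^ K := by gcongr
    _ = (x * y) ^ K := by ring

theorem choose_sub_div_le_sum_choose_mul_choose_div (n k m K : ℕ) :
    ((m - n).choose (k - n) : ℝ) / m.choose k ≤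
      (∑ i ∈ range (K + 1), (n.choose i : ℝ) * (m - n).choose (k - (n - i))) / m.choose k := by
  gcongr
  simpa using single_le_sum (f := fun i => (n.choose i : ℝ) * (m - n).choose (k - (n - i)))
    (fun i _ => by positivity) (mem_range.mpr K.succ_pos)

theorem sum_choose_mul_choose_div_le {n k m : ℕ} (K : ℕ) {y : ℝ} (hy : 2 ≤ y) (hn : 1 ≤ n)
    (hnk : n ≤ k) (hmid : m + n ≤ 2 * k) :
    (∑ i ∈ range (K + 1), (n.choose i : ℝ) * (m - n).choose (k - (n - i))) / m.choose k ≤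
      (n * y) ^ K * ((m - n).choose (k - n) / m.choose k) := by
  rw [← mul_div_assoc]
  gcongr
  calc ∑ i ∈ range (K + 1), (n.choose i : ℝ) * (m - n).choose (k - (n - i))
      ≤ (K + 1) * n ^ K * (m - n).choose (k - n) := by
        exact_mod_cast sum_choose_mul_choose_le K hn hnk hmid
    _ ≤ (n * y) ^ K * (m - n).choose (k - n) := by
        gcongr
        exact add_one_mul_pow_le_mul_pow n.cast_nonneg hy K

theorem pow_sub_div_le_prod_sub_div_sub {k m : ℝ} {n : ℕ} (hnk : (n : ℝ) ≤ k) (hkm : k + n ≤ m) :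
    ((k - n) / m) ^ n ≤ ∏ j ∈ range n, (k - j) / (m - j) := by
  rw [← card_range n, ← prod_const, card_range]
  refine prod_le_prod (fun _ _ => div_nonneg (by linarith) (by linarith)) fun j hj => ?_
  have hj : (j : ℝ) < n := by exact_mod_cast mem_range.mp hj
  rw [div_le_div_iff₀ (by linarith) (by linarith)]
  nlinarith

theorem prod_sub_div_sub_le_div_sub_pow {k m : ℝ} {n : ℕ} (hnk : (n : ℝ) ≤ k) (hkm : k + n ≤ m) :
    ∏ j ∈ range n, (k - j) / (m - j) ≤ (k / (m - n)) ^ n := by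
  rw [← card_range n, ← prod_const, card_range]
  refine prod_le_prod (fun j hj => ?_) fun j hj => ?_ <;>
    have hj : (j : ℝ) < n := by exact_mod_cast mem_range.mp hj
  · exact div_nonneg (by linarith) (by linarith)
  · rw [div_le_div_iff₀ (by linarith) (by linarith)]
    nlinarith

theorem tendsto_rpow_inv_of_pow_le_of_le_pow {S a b : ℕ → ℝ} {L : ℝ}
    (ha : Tendsto a atTop (𝓝 L)) (hb : Tendsto b atTop (𝓝 L))
    (ha₀ : ∀ᶠ n in atTop, 0 ≤ a n) (hb₀ : ∀ᶠ n in atTop, 0 ≤ b n)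
    (hlow : ∀ᶠ n in atTop, a n ^ n ≤ S n) (hup : ∀ᶠ n in atTop, S n ≤ b n ^ n) :
    Tendsto (fun n => S n ^ (n : ℝ)⁻¹) atTop (𝓝 L) := by
  refine tendsto_of_tendsto_of_tendsto_of_le_of_le' ha hb ?_ ?_
  · filter_upwards [ha₀, hlow, eventually_ne_atTop 0] with n ha₀ hlow hn
    calc a n = (a n ^ n) ^ (n : ℝ)⁻¹ := (Real.pow_rpow_inv_natCast ha₀ hn).symm
      _ ≤ S n ^ (n : ℝ)⁻¹ := by gcongr
  · filter_upwards [ha₀, hb₀, hlow, hup, eventually_ne_atTop 0] with n ha₀ hb₀ hlow hup hn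
    calc S n ^ (n : ℝ)⁻¹ ≤ (b n ^ n) ^ (n : ℝ)⁻¹ := by
          gcongr
          exact (pow_nonneg ha₀ n).trans hlow
      _ = b n := Real.pow_rpow_inv_natCast hb₀ hn

theorem exists_tendsto_zero_eq_add_pow {S : ℕ → ℝ} {L : ℝ} (hS : ∀ n, 0 ≤ S n)
    (h : Tendsto (fun n => S n ^ (n : ℝ)⁻¹) atTop (𝓝 L)) :
    ∃ ε : ℕ → ℝ, Tendsto ε atTop (𝓝 0) ∧ ∀ᶠ n in atTop, S n = (L + ε n) ^ n := by
  refine ⟨fun n => S n ^ (n : ℝ)⁻¹ - L, by simpa using h.sub_const L, ?_⟩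
  filter_upwards [eventually_ne_atTop 0] with n hn
  rw [add_sub_cancel, Real.rpow_inv_natCast_pow (hS n) hn]

theorem tendsto_natCast_div_of_mul_log_le {m : ℕ → ℝ} {c : ℝ} (hc : 0 < c)
    (hm : ∀ᶠ n : ℕ in atTop, c * (n * Real.log n) ≤ m n) :
    Tendsto (fun n : ℕ => n / m n) atTop (𝓝 0) := by
  have hlog : Tendsto (fun n : ℕ => Real.log n) atTop atTop :=
    Real.tendsto_log_atTop.comp tendsto_natCast_atTop_atTop
  refine tendsto_of_tendsto_of_tendsto_of_le_of_le' tendsto_const_nhds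
    (hlog.const_mul_atTop hc).inv_tendsto_atTop ?_ ?_
  all_goals filter_upwards [hm, hlog.eventually_gt_atTop 0, eventually_gt_atTop 0] with n hm hlog hn
  all_goals have hpos : 0 < c * (n * Real.log n) := by positivity
  · exact div_nonneg n.cast_nonneg (hpos.trans_le hm).le
  · show (n : ℝ) / m n ≤ (c * Real.log n)⁻¹
    calc (n : ℝ) / m n ≤ n / (c * (n * Real.log n)) := by gcongr
      _ = (c * Real.log n)⁻¹ := by field_simp

theorem tendsto_mul_log_mul_log_div_of_le_sqrt {K : ℕ → ℝ} {C : ℝ}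
    (hK₀ : ∀ n, 0 ≤ K n) (hK : ∀ n, K n ≤ C * Real.sqrt n) :
    Tendsto (fun n : ℕ => K n * Real.log (n * Real.log n) / n) atTop (𝓝 0) := by
  have hlog : Tendsto (fun n : ℕ => Real.log n) atTop atTop :=
    Real.tendsto_log_atTop.comp tendsto_natCast_atTop_atTop
  have hlog_sqrt : Tendsto (fun n : ℕ => 2 * C * (Real.log n / Real.sqrt n)) atTop (𝓝 0) := by
    have h := ((isLittleO_log_rpow_atTop one_half_pos).tendsto_div_nhds_zero.comp
      tendsto_natCast_atTop_atTop).const_mul (2 * C)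
    rw [mul_zero] at h
    refine h.congr fun n => ?_
    simp [Real.sqrt_eq_rpow]
  refine tendsto_of_tendsto_of_tendsto_of_le_of_le' tendsto_const_nhds hlog_sqrt ?_ ?_
  all_goals filter_upwards [hlog.eventually_ge_atTop 2, eventually_gt_atTop 0] with n hlog hn
  all_goals have hn : (1 : ℝ) ≤ n := by exact_mod_cast hn
  all_goals have hlog₀ : 0 ≤ Real.log (n * Real.log n) := Real.log_nonneg (by nlinarith)
  · exact div_nonneg (mul_nonneg (hK₀ n) hlog₀) n.cast_nonneg
  · have hsqrt : Real.sqrt n * Real.sqrt n = n := Real.mul_self_sqrt n.cast_nonneg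
    have hsqrt₀ : 0 < Real.sqrt n := Real.sqrt_pos.mpr (by linarith)
    have hlog_le : Real.log (n * Real.log n) ≤ 2 * Real.log n := by
      rw [Real.log_mul (by positivity) (by positivity)]
      linarith [Real.log_le_self (by positivity : 0 ≤ Real.log n)]
    calc K n * Real.log (n * Real.log n) / n ≤ C * Real.sqrt n * (2 * Real.log n) / n := by
          gcongr <;> linarith [hK n, hK₀ n]
      _ = 2 * C * (Real.log n / Real.sqrt n) := by
          field_simp
          linear_combination C * hsqrt

theorem tendsto_div_sub_of_tendsto_div {k m x : ℕ → ℝ} {L : ℝ}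
    (h : Tendsto (fun n => k n / m n) atTop (𝓝 L)) (hx : Tendsto (fun n => x n / m n) atTop (𝓝 0))
    (hm : ∀ᶠ n in atTop, m n ≠ 0) :
    Tendsto (fun n => k n / (m n - x n)) atTop (𝓝 L) := by
  have h' := h.div (tendsto_const_nhds.sub hx) (by norm_num : (1 : ℝ) - 0 ≠ 0)
  rw [sub_zero, div_one] at h'
  refine h'.congr' ?_
  filter_upwards [hm] with n hm
  rw [Pi.div_apply, div_div, mul_one_sub, mul_div_cancel₀ _ hm]

theorem exp_mul_log_div_mul_pow {y : ℝ} (hy : 0 < y) (K : ℕ) {n : ℕ} (hn : n ≠ 0) (r : ℝ) :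
    (Real.exp (K * Real.log y / n) * r) ^ n = y ^ K * r ^ n := by
  rw [mul_pow, ← Real.exp_nat_mul, mul_div_cancel₀ _ (Nat.cast_ne_zero.mpr hn), Real.exp_nat_mul,
    Real.exp_log hy]

theorem eventually_add_le_two_mul {k m : ℕ → ℕ} {L : ℝ} (hL : 1 / 2 < L)
    (hratio : Tendsto (fun n => (k n : ℝ) / m n) atTop (𝓝 L))
    (hn_div : Tendsto (fun n : ℕ => (n : ℝ) / m n) atTop (𝓝 0)) :
    ∀ᶠ n in atTop, m n + n ≤ 2 * k n := by
  filter_upwards [hratio.eventually (eventually_gt_nhds (by linarith : (2 * L + 1) / 4 < L)),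
    hn_div.eventually (eventually_lt_nhds (by linarith : (0 : ℝ) < L - 1 / 2))] with n hk hn
  have hm : (0 : ℝ) < m n := by
    rcases (Nat.cast_nonneg (α := ℝ) (m n)).lt_or_eq with hm | hm
    · exact hm
    · rw [← hm, div_zero] at hk
      linarith
  rw [lt_div_iff₀ hm] at hk
  rw [div_lt_iff₀ hm] at hn
  exact_mod_cast (by linarith : (m n : ℝ) + n ≤ 2 * k n)

theorem tendsto_rpow_inv_of_prod_le_of_le_mul_log_pow {k m K : ℕ → ℕ} {S : ℕ → ℝ} {L C : ℝ}
    (hk : ∀ n, n ≤ k n) (hkm : ∀ n, k n + n ≤ m n)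
    (hratio : Tendsto (fun n => (k n : ℝ) / m n) atTop (𝓝 L))
    (hn_div : Tendsto (fun n : ℕ => (n : ℝ) / m n) atTop (𝓝 0))
    (hK : ∀ n, (K n : ℝ) ≤ C * Real.sqrt n)
    (hlow : ∀ᶠ n in atTop, ∏ j ∈ range n, ((k n : ℝ) - j) / ((m n : ℝ) - j) ≤ S n)
    (hup : ∀ᶠ n in atTop,
      S n ≤ ((n : ℝ) * Real.log n) ^ (K n) * ∏ j ∈ range n, ((k n : ℝ) - j) / ((m n : ℝ) - j)) :
    Tendsto (fun n => S n ^ (n : ℝ)⁻¹) atTop (𝓝 L) := by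
  have hk' (n : ℕ) : (n : ℝ) ≤ k n := by exact_mod_cast hk n
  have hkm' (n : ℕ) : (k n : ℝ) + n ≤ m n := by exact_mod_cast hkm n
  have hm_ne : ∀ᶠ n in atTop, (m n : ℝ) ≠ 0 := by
    filter_upwards [eventually_gt_atTop 0] with n hn
    linarith [hk' n, hkm' n, (Nat.cast_pos.mpr hn : (0 : ℝ) < n)]
  have hexp := (Real.continuous_exp.tendsto 0).comp
    (tendsto_mul_log_mul_log_div_of_le_sqrt (fun n => (K n).cast_nonneg) hK)
  refine tendsto_rpow_inv_of_pow_le_of_le_pow (a := fun n => (k n - n : ℝ) / m n)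
    (b := fun n => Real.exp (K n * Real.log (n * Real.log n) / n) * (k n / (m n - n)))
    (by simpa only [sub_div, sub_zero] using hratio.sub hn_div)
    (by simpa using hexp.mul (tendsto_div_sub_of_tendsto_div hratio hn_div hm_ne))
    (.of_forall fun n => div_nonneg (sub_nonneg.mpr (hk' n)) (by linarith [hk' n, hkm' n]))
    (.of_forall fun n => mul_nonneg (Real.exp_pos _).le
      (div_nonneg (k n).cast_nonneg (by linarith [hk' n, hkm' n])))
    (hlow.mono fun n h => (pow_sub_div_le_prod_sub_div_sub (hk' n) (hkm' n)).trans h) ?_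
  filter_upwards [hup, eventually_gt_atTop 1] with n hup hn
  have hlog : 0 < Real.log n := Real.log_pos (by exact_mod_cast hn)
  calc S n ≤ _ := hup
    _ ≤ ((n : ℝ) * Real.log n) ^ (K n) * (k n / (m n - n)) ^ n := by
        gcongr
        exact prod_sub_div_sub_le_div_sub_pow (hk' n) (hkm' n)
    _ = _ := (exp_mul_log_div_mul_pow (by positivity) (K n) (by omega) _).symm

theorem almost_containment_probability_general (m₀ m₃ K : ℕ → ℕ)
    (hle : ∀ n, n ≤ m₃ n ∧ m₃ n ≤ m₀ n ∧ n ≤ m₀ n - m₃ n)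
    (hm₀ : ∃ c C : ℝ, 0 < c ∧ ∀ᶠ n : ℕ in atTop,
      c * ((n : ℝ) * Real.log n) ≤ (m₀ n : ℝ) ∧ (m₀ n : ℝ) ≤ C * ((n : ℝ) * Real.log n))
    (hratio : Tendsto (fun n => (m₃ n : ℝ) / (m₀ n : ℝ)) atTop (nhds (2 / 3)))
    (hK : ∃ C : ℝ, ∀ n, (K n : ℝ) ≤ C * Real.sqrt n)
    (S Pr : ℕ → ℝ)
    (hS : ∀ n, S n = (∑ i ∈ Finset.range (K n + 1),
        ((n.choose i : ℝ) * ((m₀ n - n).choose (m₃ n - (n - i)) : ℝ)))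
          / ((m₀ n).choose (m₃ n) : ℝ))
    (hPr : ∀ n, Pr n = ∏ j ∈ Finset.range n, ((m₃ n : ℝ) - j) / ((m₀ n : ℝ) - j)) :
    (∀ᶠ n : ℕ in atTop,
        Pr n ≤ S n ∧ S n ≤ ((n : ℝ) * Real.log n) ^ (K n) * Pr n)
    ∧ ∃ ε : ℕ → ℝ, Tendsto ε atTop (nhds 0) ∧
        ∀ᶠ n : ℕ in atTop, S n = (2 / 3 + ε n) ^ n := by
  obtain ⟨c, _, hc, hm₀_ge⟩ := hm₀
  obtain ⟨C, hK⟩ := hK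
  have hPr_eq (n : ℕ) : Pr n = ((m₀ n - n).choose (m₃ n - n) : ℝ) / (m₀ n).choose (m₃ n) := by
    rw [hPr, Nat.cast_choose_sub_div_cast_choose (hle n).1 (hle n).2.1]
  have hlow (n : ℕ) : Pr n ≤ S n := by
    rw [hPr_eq, hS]
    exact choose_sub_div_le_sum_choose_mul_choose_div n _ _ (K n)
  have hn_div : Tendsto (fun n : ℕ => n / (m₀ n : ℝ)) atTop (𝓝 0) :=
    tendsto_natCast_div_of_mul_log_le hc (hm₀_ge.mono fun _ h => h.1)
  have hup : ∀ᶠ n in atTop, S n ≤ ((n : ℝ) * Real.log n) ^ (K n) * Pr n := by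
    filter_upwards [eventually_add_le_two_mul (by norm_num) hratio hn_div,
      (Real.tendsto_log_atTop.comp tendsto_natCast_atTop_atTop).eventually_ge_atTop 2,
      eventually_ge_atTop 1] with n hmid hlog hn
    rw [hS, hPr_eq]
    exact sum_choose_mul_choose_div_le (K n) hlog hn (hle n).1 hmid
  refine ⟨hup.mono fun n h => ⟨hlow n, h⟩, exists_tendsto_zero_eq_add_pow (fun n => ?_) ?_⟩
  · rw [hS]
    positivity
  simp only [hPr] at hlow hup
  exact tendsto_rpow_inv_of_prod_le_of_le_mul_log_pow (fun n => (hle n).1)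
    (fun n => by have := hle n; omega) hratio hn_div hK (.of_forall hlow) hup

/-- For `n ≤ m₃ ≤ m₀` with `m₀ - m₃ ≥ n`, `m₀, m₃ = Θ(n log n)`, `m₃/m₀ → 2/3`,
and `K = O(√n)`, the probability that a uniformly random `m₃`-subset of `[m₀]`
contains all but at most `K` elements of a fixed `n`-set, namely
`S n = ∑_{i=0}^{K} C(n,i)·C(m₀-n, m₃-(n-i)) / C(m₀,m₃)`, satisfies
`Pr n ≤ S n ≤ (n log n)^K · Pr n` (eventually) where `Pr n = ∏_{j<n} (m₃-j)/(m₀-j)`,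
and `S n = (2/3 + o(1))^n`. -/
theorem almost_containment_probability (m₀ m₃ K : ℕ → ℕ)
    (hle : ∀ n, n ≤ m₃ n ∧ m₃ n ≤ m₀ n ∧ n ≤ m₀ n - m₃ n)
    (hm₀ : ∃ c C : ℝ, 0 < c ∧ ∀ᶠ n : ℕ in atTop,
      c * ((n : ℝ) * Real.log n) ≤ (m₀ n : ℝ) ∧ (m₀ n : ℝ) ≤ C * ((n : ℝ) * Real.log n))
    (hm₃ : ∃ c C : ℝ, 0 < c ∧ ∀ᶠ n : ℕ in atTop,
      c * ((n : ℝ) * Real.log n) ≤ (m₃ n : ℝ) ∧ (m₃ n : ℝ) ≤ C * ((n : ℝ) * Real.log n))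
    (hratio : Tendsto (fun n => (m₃ n : ℝ) / (m₀ n : ℝ)) atTop (nhds (2 / 3)))
    (hK : ∃ C : ℝ, ∀ n, (K n : ℝ) ≤ C * Real.sqrt n)
    (S Pr : ℕ → ℝ)
    (hS : ∀ n, S n = (∑ i ∈ Finset.range (K n + 1),
        ((n.choose i : ℝ) * ((m₀ n - n).choose (m₃ n - (n - i)) : ℝ)))
          / ((m₀ n).choose (m₃ n) : ℝ))
    (hPr : ∀ n, Pr n = ∏ j ∈ Finset.range n, ((m₃ n : ℝ) - j) / ((m₀ n : ℝ) - j)) :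
    (∀ᶠ n : ℕ in atTop,
        Pr n ≤ S n ∧ S n ≤ ((n : ℝ) * Real.log n) ^ (K n) * Pr n)
    ∧ ∃ ε : ℕ → ℝ, Tendsto ε atTop (nhds 0) ∧
        ∀ᶠ n : ℕ in atTop, S n = (2 / 3 + ε n) ^ n :=
  almost_containment_probability_general m₀ m₃ K hle hm₀ hratio hK S Pr hS hPr
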